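/- arXiv:1309.2749 — 3 statements merged into one kernel-verified Lean document; each statement's English description precedes it below -/
import Mathlib

section
/- Every cycle in a strongly 2-bipartite graph is chordless; in particular, strongly 2-bipartite graphs are unichord-free. -/
open SimpleGraph

/-- An edge `e` of `G` is a chord of the cycle `c` if it joins two vertices of `c`
but is not an edge of `c`. -/
def IsChord {V : Type} (G : SimpleGraph V) {v : V} (c : G.Walk v v) (e : Sym2 V) : Prop :=
  e ∈ G.edgeSet ∧ e ∉ c.edges ∧ ∀ x ∈ e, x ∈ c.support

/-- A graph is unichord-free if no cycle has a unique chord. -/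
def UnichordFree {V : Type} (G : SimpleGraph V) : Prop :=
  ∀ (v : V) (c : G.Walk v v), c.IsCycle → ¬ ∃! e : Sym2 V, IsChord G c e

/-- `G` contains a square, i.e. an induced cycle on four vertices. -/
def HasSquare {V : Type} (G : SimpleGraph V) : Prop :=
  ∃ a b c d : V, G.Adj a b ∧ G.Adj b c ∧ G.Adj c d ∧ G.Adj d a ∧
    ¬ G.Adj a c ∧ ¬ G.Adj b d ∧ a ≠ c ∧ b ≠ d

/-- A total colouring: adjacent vertices, adjacent edges, and incident
vertex-edge pairs get different colours. -/
def IsTotalColouring {V α : Type} (G : SimpleGraph V) (fv : V → α) (fe : Sym2 V → α) : Prop :=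
  (∀ u v, G.Adj u v → fv u ≠ fv v) ∧
  (∀ e₁ e₂, e₁ ∈ G.edgeSet → e₂ ∈ G.edgeSet → e₁ ≠ e₂ → (∃ x, x ∈ e₁ ∧ x ∈ e₂) →
    fe e₁ ≠ fe e₂) ∧
  (∀ x e, e ∈ G.edgeSet → x ∈ e → fv x ≠ fe e)

/-- `G` admits a total colouring with `k` colours. -/
def TotalColourable {V : Type} (G : SimpleGraph V) (k : ℕ) : Prop :=
  ∃ (fv : V → Fin k) (fe : Sym2 V → Fin k), IsTotalColouring G fv fe

/-- A proper edge colouring with `k` colours. -/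
def EdgeColourable {V : Type} (G : SimpleGraph V) (k : ℕ) : Prop :=
  ∃ fe : Sym2 V → ℕ, (∀ e ∈ G.edgeSet, fe e < k) ∧
    ∀ e₁ e₂, e₁ ∈ G.edgeSet → e₂ ∈ G.edgeSet → e₁ ≠ e₂ → (∃ x, x ∈ e₁ ∧ x ∈ e₂) →
      fe e₁ ≠ fe e₂

/-- Two-connectivity: at least three vertices and deleting any single vertex
leaves a connected graph. -/
def TwoConnected {V : Type} (G : SimpleGraph V) : Prop :=
  3 ≤ (Set.univ : Set V).ncard ∧ ∀ v : V, (G.induce ({v}ᶜ : Set V)).Connected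

/-- A graph is sparse if its vertices of degree at least 3 form an independent set. -/
def Sparse {V : Type} (G : SimpleGraph V) : Prop :=
  ∀ u v, G.Adj u v → ¬ (3 ≤ (G.neighborSet u).ncard ∧ 3 ≤ (G.neighborSet v).ncard)

/-- `G` is a cycle graph. -/
def IsCycleGraph {V : Type} (G : SimpleGraph V) : Prop :=
  G.Connected ∧ ∀ v : V, (G.neighborSet v).ncard = 2

/-- The Petersen graph: outer 5-cycle `a`, inner pentagram `b`, spokes `aᵢbᵢ`. -/
def petersen : SimpleGraph (Fin 5 ⊕ Fin 5) :=
  SimpleGraph.fromRel (fun x y => match x, y with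
    | Sum.inl i, Sum.inl j => j = i + 1
    | Sum.inr i, Sum.inr j => j = i + 2
    | Sum.inl i, Sum.inr j => i = j
    | Sum.inr _, Sum.inl _ => False)

/-- The Heawood graph: a 14-cycle together with the seven standard chords. -/
def heawood : SimpleGraph (Fin 14) :=
  SimpleGraph.fromRel (fun i j => j = i + 1 ∨
    (i, j) ∈ ([((0 : Fin 14), (9 : Fin 14)), (1, 6), (2, 11), (3, 8), (4, 13), (5, 10),
      (7, 12)] : List (Fin 14 × Fin 14)))

/-- Subdivide the edge `uv` of `G`: the new vertex is `Sum.inr ()`. -/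
def SubdivideEdge {V : Type} (G : SimpleGraph V) (u v : V) : SimpleGraph (V ⊕ Unit) :=
  SimpleGraph.fromRel (fun x y => match x, y with
    | Sum.inl a, Sum.inl b => G.Adj a b ∧ ¬ (s(a, b) = s(u, v))
    | Sum.inl a, Sum.inr _ => a = u ∨ a = v
    | Sum.inr _, Sum.inl _ => False
    | Sum.inr _, Sum.inr _ => False)

/-- `G` is obtained from `H` (up to isomorphism) by repeatedly subdividing edges
incident to at least one vertex of degree 2. -/
inductive IsSubdivisionOf : {W : Type} → SimpleGraph W → {U : Type} → SimpleGraph U → Prop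
  | refl : ∀ {W : Type} (H : SimpleGraph W) {U : Type} (G : SimpleGraph U),
      (G ≃g H) → IsSubdivisionOf H G
  | step : ∀ {W : Type} (H : SimpleGraph W) {U : Type} (G : SimpleGraph U) (u v : U),
      G.Adj u v → ((G.neighborSet u).ncard = 2 ∨ (G.neighborSet v).ncard = 2) →
      IsSubdivisionOf H G → ∀ {U' : Type} (G' : SimpleGraph U'),
      (G' ≃g SubdivideEdge G u v) → IsSubdivisionOf H G'

/-- A 2-extension of `H`: first delete a set `S` of vertices of `H`, then
subdivide edges incident to at least one vertex of degree 2. -/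
def IsTwoExtensionOf {W U : Type} (H : SimpleGraph W) (G : SimpleGraph U) : Prop :=
  ∃ S : Set W, IsSubdivisionOf (H.induce Sᶜ) G

/-- `G'` is the reduced graph of `G`: every branch of `G'` has length at most 2
(no degree-2 vertex has a neighbour of degree 2) and `G` is obtained from `G'`
by subdividing edges incident to degree-2 vertices. -/
def IsReducedGraphOf {W U : Type} (G' : SimpleGraph W) (G : SimpleGraph U) : Prop :=
  (∀ v : W, (G'.neighborSet v).ncard = 2 →
    ∀ w ∈ G'.neighborSet v, 3 ≤ (G'.neighborSet w).ncard) ∧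
  IsSubdivisionOf G' G

/-- There is an `ab`-path of `G` all of whose vertices lie in `S`. -/
def ContainsPathBetween {V : Type} (G : SimpleGraph V) (S : Set V) (a b : V) : Prop :=
  ∃ p : G.Walk a b, p.IsPath ∧ ∀ v ∈ p.support, v ∈ S

/-- The subgraph of `G` induced by `S` is precisely an `ab`-path. -/
def InducedIsPathGraph {V : Type} (G : SimpleGraph V) (S : Set V) (a b : V) : Prop :=
  ∃ p : G.Walk a b, p.IsPath ∧ (∀ v, v ∈ S ↔ v ∈ p.support) ∧
    ∀ u v, u ∈ S → v ∈ S → G.Adj u v → s(u, v) ∈ p.edges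

/-- `(X, Y, a, b)` is a split of a proper 2-cutset of `G`. -/
structure IsProper2CutsetSplit {V : Type} (G : SimpleGraph V) (X Y : Set V) (a b : V) :
    Prop where
  hne : a ≠ b
  hnadj : ¬ G.Adj a b
  hcover : ∀ v, v ∈ X ∨ v ∈ Y ∨ v = a ∨ v = b
  hdisj : Disjoint X Y
  haX : a ∉ X
  haY : a ∉ Y
  hbX : b ∉ X
  hbY : b ∉ Y
  hX2 : 2 ≤ X.ncard
  hY2 : 2 ≤ Y.ncard
  hsep : ∀ x ∈ X, ∀ y ∈ Y, ¬ G.Adj x y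
  hXpath : ContainsPathBetween G (X ∪ {a, b}) a b
  hXnotpath : ¬ InducedIsPathGraph G (X ∪ {a, b}) a b
  hYpath : ContainsPathBetween G (Y ∪ {a, b}) a b
  hYnotpath : ¬ InducedIsPathGraph G (Y ∪ {a, b}) a b

/-- `G` has a proper 2-cutset. -/
def HasProper2Cutset {V : Type} (G : SimpleGraph V) : Prop :=
  ∃ (a b : V) (X Y : Set V), IsProper2CutsetSplit G X Y a b

/-- `G` has a 1-cutset (a cutvertex) with split `(X, Y, v)`. -/
def Has1Cutset {V : Type} (G : SimpleGraph V) : Prop :=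
  ∃ (v : V) (X Y : Set V), X.Nonempty ∧ Y.Nonempty ∧ Disjoint X Y ∧ v ∉ X ∧ v ∉ Y ∧
    (∀ w, w ∈ X ∨ w ∈ Y ∨ w = v) ∧ ∀ x ∈ X, ∀ y ∈ Y, ¬ G.Adj x y

/-- `(X, Y, A, B)` is a split of a proper 1-join of `G`. -/
structure IsProper1JoinSplit {V : Type} (G : SimpleGraph V) (X Y A B : Set V) : Prop where
  hcover : ∀ v, v ∈ X ∨ v ∈ Y
  hdisj : Disjoint X Y
  hAX : A ⊆ X
  hBY : B ⊆ Y
  hA2 : 2 ≤ A.ncard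
  hB2 : 2 ≤ B.ncard
  hAstable : ∀ u ∈ A, ∀ v ∈ A, ¬ G.Adj u v
  hBstable : ∀ u ∈ B, ∀ v ∈ B, ¬ G.Adj u v
  hcomplete : ∀ u ∈ A, ∀ v ∈ B, G.Adj u v
  hother : ∀ u ∈ X, ∀ v ∈ Y, G.Adj u v → u ∈ A ∧ v ∈ B

/-- `G` has a proper 1-join. -/
def HasProper1Join {V : Type} (G : SimpleGraph V) : Prop :=
  ∃ X Y A B : Set V, IsProper1JoinSplit G X Y A B

/-! A vertex of degree 2 on a cycle already spends both of its edges on the cycle, so it is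
not an endpoint of any chord. In a strongly 2-bipartite graph every edge has an endpoint
of degree 2, hence no edge is a chord of any cycle. -/

namespace SimpleGraph.Walk.IsCycle

variable {V : Type} {G : SimpleGraph V} {u x y : V} {c : G.Walk u u}

theorem three_le_ncard_neighborSet_of_adj_of_notMem_edges (hc : c.IsCycle)
    (hx : x ∈ c.support) (hxy : G.Adj x y) (hxy_notMem : s(x, y) ∉ c.edges)
    (hfin : (G.neighborSet x).Finite) : 3 ≤ (G.neighborSet x).ncard := by
  have hy : y ∉ c.toSubgraph.neighborSet x := by
    rwa [Subgraph.mem_neighborSet, adj_toSubgraph_iff_mem_edges]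
  have hsub : insert y (c.toSubgraph.neighborSet x) ⊆ G.neighborSet x :=
    Set.insert_subset hxy (c.toSubgraph.neighborSet_subset x)
  calc 3 = (insert y (c.toSubgraph.neighborSet x)).ncard := by
        rw [Set.ncard_insert_of_notMem hy (hfin.subset (c.toSubgraph.neighborSet_subset x)),
          hc.ncard_neighborSet_toSubgraph_eq_two hx]
    _ ≤ (G.neighborSet x).ncard := Set.ncard_le_ncard hsub hfin

end SimpleGraph.Walk.IsCycle

theorem not_isChord_of_ncard_neighborSet_eq_two {V : Type} {G : SimpleGraph V} {u x : V}
    {c : G.Walk u u} (hc : c.IsCycle) {e : Sym2 V} (hx : x ∈ e)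
    (hdeg : (G.neighborSet x).ncard = 2) : ¬ IsChord G c e := by
  rintro ⟨he, he_notMem, hsupp⟩
  obtain ⟨y, rfl⟩ := Sym2.mem_iff_exists.mp hx
  have hfin : (G.neighborSet x).Finite := Set.finite_of_ncard_ne_zero (by omega)
  have := hc.three_le_ncard_neighborSet_of_adj_of_notMem_edges (hsupp x hx) he he_notMem hfin
  omega

theorem stmt0_general {V : Type} (G : SimpleGraph V) (X Y : Set V)
    (hbip : ∀ u v, G.Adj u v → (u ∈ X ∧ v ∈ Y) ∨ (u ∈ Y ∧ v ∈ X))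
    (hX : ∀ x ∈ X, (G.neighborSet x).ncard = 2) :
    (∀ (v : V) (c : G.Walk v v), c.IsCycle → ∀ e : Sym2 V, ¬ IsChord G c e) ∧
      UnichordFree G := by
  have chordless : ∀ (v : V) (c : G.Walk v v), c.IsCycle → ∀ e : Sym2 V, ¬ IsChord G c e := by
    intro v c hc e
    induction e with
    | _ a b =>
      intro hchord
      rcases hbip a b hchord.1 with ⟨haX, -⟩ | ⟨-, hbX⟩
      · exact not_isChord_of_ncard_neighborSet_eq_two hc (Sym2.mem_mk_left a b) (hX a haX) hchord
      · exact not_isChord_of_ncard_neighborSet_eq_two hc (Sym2.mem_mk_right a b) (hX b hbX) hchord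
  exact ⟨chordless, fun v c hc ⟨e, he, _⟩ => chordless v c hc e he⟩

/-- Every cycle in a strongly 2-bipartite graph is chordless; in particular,
strongly 2-bipartite graphs are unichord-free. -/
theorem stmt0 {V : Type} [Fintype V] (G : SimpleGraph V) (X Y : Set V)
    (hpart : ∀ v, v ∈ X ∨ v ∈ Y) (hdisj : Disjoint X Y)
    (hbip : ∀ u v, G.Adj u v → (u ∈ X ∧ v ∈ Y) ∨ (u ∈ Y ∧ v ∈ X))
    (hX : ∀ x ∈ X, (G.neighborSet x).ncard = 2)
    (hY : ∀ y ∈ Y, 3 ≤ (G.neighborSet y).ncard)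
    (hsq : ¬ HasSquare G) :
    (∀ (v : V) (c : G.Walk v v), c.IsCycle → ∀ e : Sym2 V, ¬ IsChord G c e) ∧
      UnichordFree G :=
  stmt0_general G X Y hbip hX
end

section
/- Let P = p_1…p_k be a path with k ≥ 3 vertices. Suppose the four elements p_1, p_1p_2, p_{k-1}p_k, p_k are precoloured with colours from {1,2,3} such that elements at distance at most 2 along the path receive different colours, and it is not the case that both c(p_1)=c(p_{k-1}p_k) and c(p_1p_2)=c(p_k). Then this precolouring extends to a total-colouring of P with 4 colours. -/
open SimpleGraph

/-!
List the elements of the path in order: vertex `pᵢ` becomes position `2i` and edge `pᵢpᵢ₊₁`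
position `2i + 1`, so that a total colouring is a sequence whose entries at distance at most 2
differ, and the precolouring fixes its first two and last two entries. For `k = 3` the only free
entry is the middle vertex, which takes the fourth colour. For `k ≥ 4` we extend by two entries
at a time: a pair `(c₃, c₄)` of distinct colours can be reached in two steps from several pairs,
one of which differs from the initial pair `(c₁, c₂)`, so induction applies; the base case
`k = 4` is a finite check.
-/

section IsTotalSeq

variable {α : Type*} {n : ℕ} {g : ℕ → α}

def IsTotalSeq (n : ℕ) (g : ℕ → α) : Prop :=
  ∀ i j, i < j → j ≤ i + 2 → j ≤ n → g i ≠ g j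

theorem IsTotalSeq.ne (hg : IsTotalSeq n g) {i j : ℕ} (hne : i ≠ j) (hi : i ≤ n) (hj : j ≤ n)
    (hj₂ : j ≤ i + 2) (hi₂ : i ≤ j + 2) : g i ≠ g j := by
  rcases hne.lt_or_gt with h | h
  · exact hg i j h hj₂ hj
  · exact (hg j i h hi₂ hi).symm

theorem isTotalSeq_one (h : g 0 ≠ g 1) : IsTotalSeq 1 g := by
  intro i j hij _ hj
  obtain ⟨rfl, rfl⟩ : i = 0 ∧ j = 1 := by omega
  exact h

theorem IsTotalSeq.update (hg : IsTotalSeq (n + 1) g) {a : α} (h₀ : g n ≠ a)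
    (h₁ : g (n + 1) ≠ a) : IsTotalSeq (n + 2) (Function.update g (n + 2) a) := by
  intro i j hij hji hj
  rw [Function.update_of_ne (by omega)]
  rcases (show j ≤ n + 1 ∨ j = n + 2 by omega) with hj | rfl
  · rw [Function.update_of_ne (by omega)]
    exact hg i j hij hji hj
  · rw [Function.update_self]
    rcases (show i = n ∨ i = n + 1 by omega) with rfl | rfl
    exacts [h₀, h₁]

end IsTotalSeq

theorem isTotalColouring_pathGraph_of_isTotalSeq {α : Type} {k : ℕ} {g : ℕ → α}
    (hg : IsTotalSeq (2 * k - 2) g) :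
    IsTotalColouring (pathGraph k) (fun v => g (2 * v.val))
      (Sym2.lift ⟨fun u v => g (u.val + v.val), fun _ _ => congrArg g (add_comm _ _)⟩) := by
  refine ⟨?_, ?_, ?_⟩
  · intro u v huv
    rw [pathGraph_adj] at huv
    exact hg.ne (by omega) (by omega) (by omega) (by omega) (by omega)
  · intro e₁ e₂ he₁ he₂ hne hshare
    induction e₁ using Sym2.inductionOn with | hf a b => ?_
    induction e₂ using Sym2.inductionOn with | hf c d => ?_
    obtain ⟨x, hx₁, hx₂⟩ := hshare
    simp only [Sym2.mem_iff, Fin.ext_iff] at hx₁ hx₂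
    simp only [ne_eq, Sym2.eq_iff, Fin.ext_iff] at hne
    rw [mem_edgeSet, pathGraph_adj] at he₁ he₂
    rw [Sym2.lift_mk, Sym2.lift_mk]
    exact hg.ne (by omega) (by omega) (by omega) (by omega) (by omega)
  · intro x e he hxe
    induction e using Sym2.inductionOn with | hf a b => ?_
    simp only [Sym2.mem_iff, Fin.ext_iff] at hxe
    rw [mem_edgeSet, pathGraph_adj] at he
    rw [Sym2.lift_mk]
    exact hg.ne (by omega) (by omega) (by omega) (by omega) (by omega)

theorem exists_isTotalSeq_four {c₁ c₂ c₃ c₄ : Fin 4}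
    (h₁ : c₁.val < 3) (h₂ : c₂.val < 3) (h₃ : c₃.val < 3) (h₄ : c₄.val < 3)
    (h12 : c₁ ≠ c₂) (h23 : c₂ ≠ c₃) (h34 : c₃ ≠ c₄) :
    ∃ g : ℕ → Fin 4, IsTotalSeq 4 g ∧ g 0 = c₁ ∧ g 1 = c₂ ∧ g 3 = c₃ ∧ g 4 = c₄ := by
  refine ⟨_, (((isTotalSeq_one (g := Function.update (fun _ => c₂) 0 c₁) ?_).update
    (a := 3) ?_ ?_).update (a := c₃) ?_ ?_).update (a := c₄) ?_ ?_, ?_⟩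
  all_goals simp [Fin.ext_iff] at * <;> omega

-- The conditions say that `c₁, c₂, x, y, z, c₃, c₄` has entries at distance ≤ 2 distinct.
set_option synthInstance.maxSize 4000 in
theorem exists_middle_three_fin_four : ∀ c₁ c₂ c₃ c₄ : Fin 4, c₁ ≠ c₂ → c₃ ≠ c₄ →
    ¬(c₁ = c₃ ∧ c₂ = c₄) → ∃ x y z : Fin 4, c₁ ≠ x ∧ c₂ ≠ x ∧ c₂ ≠ y ∧ x ≠ y ∧ x ≠ z ∧ y ≠ z ∧
      y ≠ c₃ ∧ z ≠ c₃ ∧ z ≠ c₄ := by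
  decide

-- The last three conditions say that `d₃, d₄, c₃, c₄` has entries at distance ≤ 2 distinct.
theorem exists_two_step_pred_fin_four : ∀ c₁ c₂ c₃ c₄ : Fin 4, c₃ ≠ c₄ →
    ∃ d₃ d₄ : Fin 4, d₃ ≠ d₄ ∧ ¬(c₁ = d₃ ∧ c₂ = d₄) ∧ d₃ ≠ c₃ ∧ d₄ ≠ c₃ ∧ d₄ ≠ c₄ := by
  decide

theorem exists_isTotalSeq_two_mul_add_six (j : ℕ) {c₁ c₂ c₃ c₄ : Fin 4} (h12 : c₁ ≠ c₂)
    (h34 : c₃ ≠ c₄) (hno : ¬(c₁ = c₃ ∧ c₂ = c₄)) :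
    ∃ g : ℕ → Fin 4, IsTotalSeq (2 * j + 6) g ∧ g 0 = c₁ ∧ g 1 = c₂ ∧ g (2 * j + 5) = c₃ ∧
      g (2 * j + 6) = c₄ := by
  induction j generalizing c₃ c₄ with
  | zero =>
    obtain ⟨x, y, z, h⟩ := exists_middle_three_fin_four c₁ c₂ c₃ c₄ h12 h34 hno
    refine ⟨_, (((((isTotalSeq_one (g := Function.update (fun _ => c₂) 0 c₁) ?_).update
      (a := x) ?_ ?_).update (a := y) ?_ ?_).update (a := z) ?_ ?_).update (a := c₃) ?_ ?_).update
      (a := c₄) ?_ ?_, ?_⟩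
    all_goals simp [*]
  | succ j ih =>
    obtain ⟨d₃, d₄, hd34, hdno, hd₃, hd₄, hd₄'⟩ := exists_two_step_pred_fin_four c₁ c₂ c₃ c₄ h34
    obtain ⟨g, hg, h0, h1, hg₃, hg₄⟩ := ih hd34 hdno
    refine ⟨_, ((hg.update (n := 2 * j + 5) (a := c₃) ?_ ?_).update (a := c₄) ?_ ?_), ?_⟩
    all_goals simp [*, mul_add]

/-- Colours `1, 2, 3` are the values of `Fin 4` with `val < 3`. -/
theorem stmt1 (k : ℕ) (hk : 3 ≤ k) (c₁ c₂ c₃ c₄ : Fin 4)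
    (h₁ : c₁.val < 3) (h₂ : c₂.val < 3) (h₃ : c₃.val < 3) (h₄ : c₄.val < 3)
    (h12 : c₁ ≠ c₂) (h34 : c₃ ≠ c₄) (hk3 : k = 3 → c₂ ≠ c₃)
    (hno : ¬ (c₁ = c₃ ∧ c₂ = c₄)) :
    ∃ (fv : Fin k → Fin 4) (fe : Sym2 (Fin k) → Fin 4),
      IsTotalColouring (SimpleGraph.pathGraph k) fv fe ∧
      fv ⟨0, by omega⟩ = c₁ ∧ fe s((⟨0, by omega⟩ : Fin k), (⟨1, by omega⟩ : Fin k)) = c₂ ∧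
      fe s((⟨k - 2, by omega⟩ : Fin k), (⟨k - 1, by omega⟩ : Fin k)) = c₃ ∧
      fv ⟨k - 1, by omega⟩ = c₄ := by
  obtain ⟨g, hg, h0, h1, hk₃, hk₄⟩ : ∃ g : ℕ → Fin 4, IsTotalSeq (2 * k - 2) g ∧ g 0 = c₁ ∧
      g 1 = c₂ ∧ g (2 * k - 3) = c₃ ∧ g (2 * k - 2) = c₄ := by
    rcases hk.eq_or_lt with rfl | hk4
    · exact exists_isTotalSeq_four h₁ h₂ h₃ h₄ h12 (hk3 rfl) h34
    · obtain ⟨j, rfl⟩ := Nat.exists_eq_add_of_lt hk4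
      rw [show 2 * (3 + j + 1) - 2 = 2 * j + 6 by omega,
        show 2 * (3 + j + 1) - 3 = 2 * j + 5 by omega]
      exact exists_isTotalSeq_two_mul_add_six j h12 h34 hno
  refine ⟨_, _, isTotalColouring_pathGraph_of_isTotalSeq hg, h0, h1, ?_, ?_⟩
  · simpa [show k - 2 + (k - 1) = 2 * k - 3 by omega] using hk₃
  · simpa [show 2 * (k - 1) = 2 * k - 2 by omega] using hk₄
end

section
/- If G is a {square,unichord}-free graph, u_{ab} is the vertex obtained by contracting two vertices a, b that each have exactly one neighbour (a' and b' respectively, with a' ≠ b') outside a proper 2-cutset side, and no vertex of Y is adjacent to both a' and b', then the contracted graph G_Y is {square,unichord}-free. -/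
open SimpleGraph

/-- The graph `G_Y` obtained from `G[Y ∪ {a,b}]` by identifying `a` and `b`
into the single vertex `u_{ab} = Sum.inr ()`, adjacent to `a'` and `b'`. -/
def ContractedGY {V : Type} (G : SimpleGraph V) (Y : Set V) (a' b' : V) :
    SimpleGraph (↥Y ⊕ Unit) :=
  SimpleGraph.fromRel (fun x y => match x, y with
    | Sum.inl u, Sum.inl v => G.Adj u v
    | Sum.inl u, Sum.inr _ => (u : V) = a' ∨ (u : V) = b'
    | Sum.inr _, Sum.inl _ => False
    | Sum.inr _, Sum.inr _ => False)

/-!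
A cycle of `G_Y` with a unique chord either avoids `u_{ab}`, and is then a cycle of `G[Y]` with
the same chords, or runs through `a' u_{ab} b'`. In the second case, replacing `u_{ab}` by a
chordless `ab`-path through `X` gives a cycle of `G` with the same chords, because `X` sees
nothing of `Y` and `a`, `b` see only `a'`, `b'` there. A square through `u_{ab}` would give a
common neighbour of `a'` and `b'` in `Y`.
-/

namespace SimpleGraph.Walk

variable {V W : Type*} {G : SimpleGraph V} {H : SimpleGraph W}

theorem isChord_reverse_iff {u v : V} (p : G.Walk u v) (e : Sym2 V) :
    p.reverse.IsChord e ↔ p.IsChord e := by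
  induction e using Sym2.ind with
  | _ z w => simp only [isChord_sym2Mk, edges_reverse, support_reverse, List.mem_reverse]

theorem isChord_rotate_iff [DecidableEq V] {u v : V} (c : G.Walk v v) (h : u ∈ c.support)
    (e : Sym2 V) : (c.rotate u h).IsChord e ↔ c.IsChord e := by
  induction e using Sym2.ind with
  | _ z w => simp only [isChord_sym2Mk, (c.rotate_edges u h).mem_iff, mem_support_rotate_iff]

theorem isChord_map_iff (f : G ↪g H) {u v : V} (p : G.Walk u v) (e : Sym2 V) :
    (p.map f.toHom).IsChord (e.map f) ↔ p.IsChord e := by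
  induction e using Sym2.ind with
  | _ z w =>
    have hedge := List.mem_map_of_injective (Sym2.map.injective f.injective) (l := p.edges)
      (a := s(z, w))
    simp only [Sym2.map_mk] at hedge
    simp only [Sym2.map_mk, isChord_sym2Mk, edges_map, support_map, RelEmbedding.coe_toRelHom,
      List.mem_map_of_injective f.injective, f.map_adj_iff, hedge]

theorem exists_eq_map_of_isChord_map (f : G ↪g H) {u v : V} (p : G.Walk u v) {e : Sym2 W}
    (he : (p.map f.toHom).IsChord e) : ∃ e' : Sym2 V, e'.map f = e := by
  induction e using Sym2.ind with
  | _ z w =>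
    obtain ⟨-, -, hz, hw⟩ := isChord_sym2Mk.mp he
    simp only [support_map, List.mem_map] at hz hw
    obtain ⟨z, -, rfl⟩ := hz
    obtain ⟨w, -, rfl⟩ := hw
    exact ⟨s(z, w), rfl⟩

theorem existsUnique_isChord_map_iff (f : G ↪g H) {u v : V} (p : G.Walk u v) :
    (∃! e, (p.map f.toHom).IsChord e) ↔ ∃! e, p.IsChord e := by
  constructor
  · rintro ⟨e, he, huniq⟩
    obtain ⟨e, rfl⟩ := exists_eq_map_of_isChord_map f p he
    refine ⟨e, (isChord_map_iff f p e).mp he, fun e' he' => ?_⟩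
    exact Sym2.map.injective f.injective (huniq _ ((isChord_map_iff f p e').mpr he'))
  · rintro ⟨e, he, huniq⟩
    refine ⟨e.map f, (isChord_map_iff f p e).mpr he, fun e' he' => ?_⟩
    obtain ⟨e', rfl⟩ := exists_eq_map_of_isChord_map f p he'
    rw [huniq e' ((isChord_map_iff f p e').mp he')]

theorem isChordless_map_iff (f : G ↪g H) {u v : V} (p : G.Walk u v) :
    (p.map f.toHom).IsChordless ↔ p.IsChordless := by
  refine ⟨fun h e he => h ((isChord_map_iff f p e).mpr he), fun h e he => ?_⟩
  obtain ⟨e, rfl⟩ := exists_eq_map_of_isChord_map f p he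
  exact h ((isChord_map_iff f p e).mp he)

theorem exists_eq_map_of_support_subset_range (f : G ↪g H) {u v : V} (p : H.Walk (f u) (f v))
    (hp : ∀ z ∈ p.support, z ∈ Set.range f) : ∃ p' : G.Walk u v, p'.map f.toHom = p := by
  suffices ∀ {x y : W} (p : H.Walk x y), (∀ z ∈ p.support, z ∈ Set.range f) →
      ∀ {u v : V} (hu : f u = x) (hv : f v = y), ∃ p' : G.Walk u v,
        p'.map f.toHom = p.copy hu.symm hv.symm from this p hp rfl rfl
  intro x y p
  induction p with
  | nil =>
    rintro - u v rfl hv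
    obtain rfl := f.injective hv
    exact ⟨nil, rfl⟩
  | cons h p ih =>
    rintro hp u v rfl rfl
    obtain ⟨w, rfl⟩ := hp _ (List.mem_cons_of_mem _ p.start_mem_support)
    obtain ⟨p', hp'⟩ := ih (fun z hz => hp z (List.mem_cons_of_mem _ hz)) rfl rfl
    exact ⟨cons (f.map_adj_iff.mp h) p', by simpa using hp'⟩

theorem mem_of_mem_support_map_induce {S : Set V} {u v : S} (p : (G.induce S).Walk u v) {z : V}
    (hz : z ∈ (p.map (Embedding.induce S).toHom).support) : z ∈ S := by
  rw [support_map, List.mem_map] at hz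
  obtain ⟨z, -, rfl⟩ := hz
  exact z.2

theorem isChord_iff_of_support_subset {u v x y : V} {p : G.Walk u v} {c : G.Walk x y}
    (hs : p.support ⊆ c.support) (he : p.edges ⊆ c.edges)
    (hout : ∀ z w, s(z, w) ∈ c.edges → z ∈ p.support → w ∈ p.support → s(z, w) ∈ p.edges)
    (hind : ∀ z w, z ∈ c.support → w ∈ c.support → z ∉ p.support → G.Adj z w →
      s(z, w) ∈ c.edges)
    (e : Sym2 V) : c.IsChord e ↔ p.IsChord e := by
  induction e using Sym2.ind with
  | _ z w =>
    simp only [isChord_sym2Mk]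
    constructor
    · rintro ⟨hzw, hc, hz, hw⟩
      refine ⟨hzw, fun h => hc (he h), ?_, ?_⟩
      · by_contra hzp
        exact hc (hind z w hz hw hzp hzw)
      · by_contra hwp
        exact hc (Sym2.eq_swap ▸ hind w z hw hz hwp hzw.symm)
    · rintro ⟨hzw, hp, hz, hw⟩
      exact ⟨hzw, fun h => hp (hout z w h hz hw), hs hz, hs hw⟩

theorem isChordless_of_length_eq_dist {u v : V} (p : G.Walk u v) (hp : p.length = G.dist u v) :
    p.IsChordless := by
  classical
  induction p with
  | nil =>
    refine isChordless_iff_forall_mem_edges.mpr fun z w hz hw hzw => ?_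
    simp only [support_nil, List.mem_singleton] at hz hw
    exact absurd (hz ▸ hw ▸ hzw) (G.irrefl)
  | @cons u m v h p ih =>
    have hdist : G.dist u v ≤ G.dist m v + 1 := by
      obtain ⟨q, hq⟩ := p.reachable.exists_walk_length_eq_dist
      simpa [hq] using dist_le (cons h q)
    have hp' : p.length = G.dist m v := by
      have := dist_le p
      simp only [length_cons] at hp
      omega
    -- an edge from `u` to a later vertex `w` of `p` would shortcut `p`
    have hshort : ∀ w (hw : w ∈ p.support), w ≠ m → G.Adj u w → False := fun w hw hwm huw => by
      have := dist_le (cons huw (p.dropUntil w hw))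
      have := length_dropUntil_lt_length hw hwm
      simp only [length_cons] at *
      omega
    refine isChordless_iff_forall_mem_edges.mpr fun z w hz hw hzw => ?_
    simp only [support_cons, List.mem_cons, edges_cons] at hz hw ⊢
    rcases hz with rfl | hz <;> rcases hw with rfl | hw
    · exact absurd hzw (G.irrefl)
    · by_cases hwm : w = m
      · exact .inl (hwm ▸ rfl)
      · exact (hshort w hw hwm hzw).elim
    · by_cases hzm : z = m
      · exact .inl (hzm ▸ Sym2.eq_swap)
      · exact (hshort z hz hzm hzw.symm).elim
    · exact .inr ((ih hp').mem_edges hz hw hzw)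

theorem IsCycle.exists_eq_cons_concat {u : V} {c : G.Walk u u} (hc : c.IsCycle) :
    ∃ (x y : V) (h₁ : G.Adj u x) (q : G.Walk x y) (h₂ : G.Adj y u), c = .cons h₁ (q.concat h₂) := by
  cases c with
  | nil => exact (hc.ne_nil rfl).elim
  | cons h₁ rest =>
    cases rest with
    | nil => exact (G.irrefl h₁).elim
    | cons h r =>
      obtain ⟨y, q, h₂, hq⟩ := exists_cons_eq_concat h r
      exact ⟨_, y, h₁, q, h₂, hq ▸ rfl⟩

theorem IsCycle.ne_of_cons_concat {u x y : V} {h₁ : G.Adj u x} {q : G.Walk x y}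
    {h₂ : G.Adj y u} (hc : (cons h₁ (q.concat h₂)).IsCycle) : x ≠ y := by
  rintro rfl
  exact ((cons_isCycle_iff _ _).mp hc).2 (by simp [edges_concat, Sym2.eq_swap])

end SimpleGraph.Walk

theorem ContainsPathBetween.exists_isChordless {V : Type} {G : SimpleGraph V} {S : Set V}
    {a b : V} (h : ContainsPathBetween G S a b) :
    ∃ P : G.Walk a b, P.IsPath ∧ P.IsChordless ∧ ∀ z ∈ P.support, z ∈ S := by
  obtain ⟨w, -, hwS⟩ := h
  obtain ⟨P, hP⟩ := (w.induce S hwS).reachable.exists_walk_length_eq_dist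
  exact ⟨P.map (Embedding.induce S).toHom,
    (P.isPath_of_length_eq_dist hP).map Subtype.val_injective,
    (Walk.isChordless_map_iff _ P).mpr (P.isChordless_of_length_eq_dist hP),
    fun _ => P.mem_of_mem_support_map_induce⟩

theorem isChord_iff_walk_isChord {V : Type} {G : SimpleGraph V} {v : V} (c : G.Walk v v)
    (e : Sym2 V) : IsChord G c e ↔ c.IsChord e := by
  induction e using Sym2.ind with
  | _ z w => simp [IsChord, Walk.isChord_sym2Mk]

theorem unichordFree_iff {V : Type} {G : SimpleGraph V} :
    UnichordFree G ↔ ∀ (v : V) (c : G.Walk v v), c.IsCycle → ¬ ∃! e, c.IsChord e := by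
  simp only [UnichordFree, isChord_iff_walk_isChord]

theorem eq_of_adj_of_neighborSet_inter_eq {V : Type} {G : SimpleGraph V} {Y : Set V}
    {v w v' : V} (hv : G.neighborSet v ∩ Y = {v'}) (hw : w ∈ Y) (hvw : G.Adj v w) : w = v' :=
  hv.subset ⟨hvw, hw⟩

theorem adj_of_neighborSet_inter_eq {V : Type} {G : SimpleGraph V} {Y : Set V} {v v' : V}
    (hv : G.neighborSet v ∩ Y = {v'}) : G.Adj v v' ∧ v' ∈ Y :=
  hv.symm.subset rfl

namespace IsProper2CutsetSplit

variable {V : Type} {G : SimpleGraph V} {X Y : Set V} {a b a' b' : V}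

theorem notMem_of_mem_union (hsplit : IsProper2CutsetSplit G X Y a b) {z : V}
    (hz : z ∈ X ∪ {a, b}) : z ∉ Y := by
  rcases hz with hzX | rfl | rfl
  · exact Set.disjoint_left.mp hsplit.hdisj hzX
  · exact hsplit.haY
  · exact hsplit.hbY

/-- The path `b' b P a a'` through the `X`-side, for a chordless `ab`-path `P` in `X ∪ {a, b}`. -/
theorem exists_detour (hsplit : IsProper2CutsetSplit G X Y a b)
    (ha' : G.neighborSet a ∩ Y = {a'}) (hb' : G.neighborSet b ∩ Y = {b'}) (hab' : a' ≠ b') :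
    ∃ r : G.Walk b' a', r.IsPath ∧ 1 < r.length ∧
      (∀ z ∈ r.support, z ∈ Y → z = a' ∨ z = b') ∧
      (∀ e ∈ r.edges, ∃ z ∈ e, z ∉ Y) ∧
      ∀ z w, z ∈ r.support → z ∉ Y → (w ∈ Y ∨ w ∈ r.support) → G.Adj z w →
        s(z, w) ∈ r.edges := by
  obtain ⟨P, hPpath, hPchordless, hPS⟩ := hsplit.hXpath.exists_isChordless
  have hPY : ∀ z ∈ P.support, z ∉ Y := fun z hz => hsplit.notMem_of_mem_union (hPS z hz)
  obtain ⟨haa', ha'Y⟩ := adj_of_neighborSet_inter_eq ha'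
  obtain ⟨hbb', hb'Y⟩ := adj_of_neighborSet_inter_eq hb'
  set r : G.Walk b' a' := .cons hbb'.symm (P.reverse.concat haa')
  have hr_support : ∀ z, z ∈ r.support ↔ z = b' ∨ z ∈ P.support ∨ z = a' := by
    simp [r, Walk.support_concat]
  have hr_edges : ∀ e, e ∈ r.edges ↔ e = s(b', b) ∨ e ∈ P.edges ∨ e = s(a, a') := by
    simp [r, Walk.edges_concat]
  have hrP : ∀ z ∈ r.support, z ∉ Y → z ∈ P.support := by
    intro z hz hzY
    rcases (hr_support z).mp hz with rfl | hz | rfl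
    exacts [(hzY hb'Y).elim, hz, (hzY ha'Y).elim]
  refine ⟨r, ?_, by simp [r], ?_, ?_, ?_⟩
  · simp only [r, Walk.cons_isPath_iff, Walk.concat_isPath_iff, Walk.isPath_reverse_iff,
      Walk.support_concat, Walk.support_reverse, List.mem_append, List.mem_reverse,
      List.mem_singleton]
    exact ⟨⟨hPpath, fun h => hPY _ h ha'Y⟩, not_or.mpr ⟨fun h => hPY _ h hb'Y, hab'.symm⟩⟩
  · intro z hz hzY
    rcases (hr_support z).mp hz with h | hz | h
    exacts [.inr h, (hPY z hz hzY).elim, .inl h]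
  · intro e he
    rcases (hr_edges e).mp he with rfl | he | rfl
    · exact ⟨b, Sym2.mem_mk_right _ _, hsplit.hbY⟩
    · exact ⟨_, e.out_fst_mem, hPY _ (Walk.mem_support_of_mem_edges he e.out_fst_mem)⟩
    · exact ⟨a, Sym2.mem_mk_left _ _, hsplit.haY⟩
  · intro z w hz hzY hw hzw
    have hzP := hrP z hz hzY
    by_cases hwY : w ∈ Y
    · rcases hPS z hzP with hzX | rfl | rfl
      · exact (hsplit.hsep z hzX w hwY hzw).elim
      · rw [eq_of_adj_of_neighborSet_inter_eq ha' hwY hzw, hr_edges]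
        exact .inr (.inr rfl)
      · rw [eq_of_adj_of_neighborSet_inter_eq hb' hwY hzw, hr_edges]
        exact .inl Sym2.eq_swap
    · rw [hr_edges]
      exact .inr (.inl (hPchordless.mem_edges hzP (hrP w (hw.resolve_left hwY) hwY) hzw))

theorem not_existsUnique_isChord (huf : UnichordFree G) (hsplit : IsProper2CutsetSplit G X Y a b)
    (ha' : G.neighborSet a ∩ Y = {a'}) (hb' : G.neighborSet b ∩ Y = {b'}) (hab' : a' ≠ b')
    (p : G.Walk a' b') (hp : p.IsPath) (hpY : ∀ z ∈ p.support, z ∈ Y) :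
    ¬ ∃! e, p.IsChord e := by
  obtain ⟨r, hr, hrlen, hrY, hr_out, hr_ind⟩ := hsplit.exists_detour ha' hb' hab'
  have hdisj : p.support.tail.Disjoint r.support.tail := by
    intro z hzp hzr
    rcases hrY z (List.mem_of_mem_tail hzr) (hpY z (List.mem_of_mem_tail hzp)) with rfl | rfl
    · exact (List.nodup_cons.mp (p.cons_tail_support ▸ hp.support_nodup)).1 hzp
    · exact (List.nodup_cons.mp (r.cons_tail_support ▸ hr.support_nodup)).1 hzr
  have hsupport : ∀ z, z ∈ (p.append r).support ↔ z ∈ p.support ∨ z ∈ r.support :=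
    fun z => Walk.mem_support_append_iff p r
  have hedges : ∀ e, e ∈ (p.append r).edges ↔ e ∈ p.edges ∨ e ∈ r.edges := by
    simp [Walk.edges_append]
  have hchord : ∀ e, (p.append r).IsChord e ↔ p.IsChord e := by
    refine Walk.isChord_iff_of_support_subset (fun z hz => (hsupport z).mpr (.inl hz))
      (fun e he => (hedges e).mpr (.inl he)) ?_ ?_
    · intro z w hzw hz hw
      refine ((hedges _).mp hzw).resolve_right fun hr => ?_
      obtain ⟨t, ht, htY⟩ := hr_out _ hr
      rcases Sym2.mem_iff.mp ht with rfl | rfl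
      exacts [htY (hpY t hz), htY (hpY t hw)]
    · intro z w hz hw hzp hzw
      have hzr := ((hsupport z).mp hz).resolve_left hzp
      have hzY : z ∉ Y := fun hzY => hzp <| by
        rcases hrY z hzr hzY with rfl | rfl
        exacts [p.start_mem_support, p.end_mem_support]
      exact (hedges _).mpr <| .inr <| hr_ind z w hzr hzY
        (((hsupport w).mp hw).imp_left (hpY w)) hzw
  rw [unichordFree_iff] at huf
  simp only [← hchord]
  exact huf _ _ (hp.isCycle_append hr hdisj (.inr hrlen))

theorem not_existsUnique_isChord_of_mem_ends (huf : UnichordFree G)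
    (hsplit : IsProper2CutsetSplit G X Y a b)
    (ha' : G.neighborSet a ∩ Y = {a'}) (hb' : G.neighborSet b ∩ Y = {b'}) {u v : V}
    (hu : u = a' ∨ u = b') (hv : v = a' ∨ v = b') (huv : u ≠ v)
    (p : G.Walk u v) (hp : p.IsPath) (hpY : ∀ z ∈ p.support, z ∈ Y) :
    ¬ ∃! e, p.IsChord e := by
  rcases hu with rfl | rfl <;> rcases hv with rfl | rfl
  · exact (huv rfl).elim
  · exact hsplit.not_existsUnique_isChord huf ha' hb' huv p hp hpY
  · have := hsplit.not_existsUnique_isChord huf ha' hb' huv.symm p.reverse hp.reverse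
      (by simpa only [Walk.support_reverse, List.mem_reverse] using hpY)
    simpa only [Walk.isChord_reverse_iff] using this
  · exact (huv rfl).elim

end IsProper2CutsetSplit

namespace ContractedGY

variable {V : Type} {G : SimpleGraph V} {X Y : Set V} {a b a' b' : V}

@[simp]
theorem adj_inl_inl (u v : Y) : (ContractedGY G Y a' b').Adj (.inl u) (.inl v) ↔ G.Adj u v := by
  simp only [ContractedGY, fromRel_adj, ne_eq, Sum.inl.injEq, G.adj_comm v, or_self,
    and_iff_right_iff_imp]
  exact fun h => Subtype.coe_ne_coe.mp h.ne

@[simp]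
theorem adj_inr_inl (u : Y) :
    (ContractedGY G Y a' b').Adj (.inr ()) (.inl u) ↔ (u : V) = a' ∨ (u : V) = b' := by
  simp [ContractedGY]

theorem exists_eq_inl_of_adj_inr {z : Y ⊕ Unit} (h : (ContractedGY G Y a' b').Adj (.inr ()) z) :
    ∃ u : Y, z = .inl u ∧ ((u : V) = a' ∨ (u : V) = b') := by
  rcases z with u | ⟨⟩
  · exact ⟨u, rfl, (adj_inr_inl u).mp h⟩
  · exact (h.ne rfl).elim

def inlEmbedding : G.induce Y ↪g ContractedGY G Y a' b' where
  toEmbedding := .inl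
  map_rel_iff' := adj_inl_inl _ _

theorem exists_eq_map_inlEmbedding {u v : Y} (p : (ContractedGY G Y a' b').Walk (.inl u) (.inl v))
    (hp : .inr () ∉ p.support) : ∃ p' : (G.induce Y).Walk u v, p'.map inlEmbedding.toHom = p := by
  refine Walk.exists_eq_map_of_support_subset_range inlEmbedding p ?_
  rintro (z | ⟨⟩) hz
  exacts [⟨z, rfl⟩, (hp hz).elim]

theorem existsUnique_isChord_map_inlEmbedding_iff {u v : Y} (p : (G.induce Y).Walk u v) :
    (∃! e, (p.map (inlEmbedding (a' := a') (b' := b')).toHom).IsChord e) ↔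
      ∃! e, (p.map (Embedding.induce Y).toHom).IsChord e := by
  rw [Walk.existsUnique_isChord_map_iff, Walk.existsUnique_isChord_map_iff]

theorem not_square_through_inr (hnoc : ¬ ∃ y ∈ Y, G.Adj y a' ∧ G.Adj y b')
    {q r s : Y ⊕ Unit} (hq : (ContractedGY G Y a' b').Adj (.inr ()) q)
    (hqr : (ContractedGY G Y a' b').Adj q r) (hrs : (ContractedGY G Y a' b').Adj r s)
    (hs : (ContractedGY G Y a' b').Adj s (.inr ())) (hr : .inr () ≠ r) (hqs : q ≠ s) : False := by
  obtain ⟨q, rfl, hqv⟩ := exists_eq_inl_of_adj_inr hq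
  obtain ⟨s, rfl, hsv⟩ := exists_eq_inl_of_adj_inr hs.symm
  rcases r with r | ⟨⟩
  · rw [adj_inl_inl] at hqr hrs
    have hqs' : (q : V) ≠ s := fun h => hqs (congrArg _ (Subtype.ext h))
    rcases hqv with rfl | rfl <;> rcases hsv with hs | hs
    · exact hqs' hs.symm
    · exact hnoc ⟨r, r.2, hqr.symm, hs ▸ hrs⟩
    · exact hnoc ⟨r, r.2, hs ▸ hrs, hqr.symm⟩
    · exact hqs' hs.symm
  · exact hr rfl

theorem not_hasSquare (hsq : ¬ HasSquare G) (hnoc : ¬ ∃ y ∈ Y, G.Adj y a' ∧ G.Adj y b') :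
    ¬ HasSquare (ContractedGY G Y a' b') := by
  rintro ⟨p, q, r, s, hpq, hqr, hrs, hsp, hpr, hqs, hpr', hqs'⟩
  rcases p with p | ⟨⟩
  swap; exact not_square_through_inr hnoc hpq hqr hrs hsp hpr' hqs'
  rcases q with q | ⟨⟩
  swap; exact not_square_through_inr hnoc hqr hrs hsp hpq hqs' hpr'.symm
  rcases r with r | ⟨⟩
  swap; exact not_square_through_inr hnoc hrs hsp hpq hqr hpr'.symm hqs'.symm
  rcases s with s | ⟨⟩
  swap; exact not_square_through_inr hnoc hsp hpq hqr hrs hqs'.symm hpr'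
  simp only [adj_inl_inl, ne_eq, Sum.inl.injEq] at *
  exact hsq ⟨p, q, r, s, hpq, hqr, hrs, hsp, hpr, hqs, fun h => hpr' (Subtype.ext h),
    fun h => hqs' (Subtype.ext h)⟩

theorem not_existsUnique_isChord_of_inr_notMem (huf : UnichordFree G) {v : Y ⊕ Unit}
    (c : (ContractedGY G Y a' b').Walk v v) (hc : c.IsCycle) (hinr : .inr () ∉ c.support) :
    ¬ ∃! e, c.IsChord e := by
  rcases v with v | ⟨⟩
  · obtain ⟨c, rfl⟩ := exists_eq_map_inlEmbedding c hinr
    have hc : c.IsCycle := .of_map (f := inlEmbedding.toHom) hc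
    exact fun h => unichordFree_iff.mp huf _ _
      (hc.map (f := (Embedding.induce Y).toHom) Subtype.val_injective)
      ((existsUnique_isChord_map_inlEmbedding_iff c).mp h)
  · exact (hinr c.start_mem_support).elim

theorem isChord_cons_concat_iff {x y : Y} {h₁ : (ContractedGY G Y a' b').Adj (.inr ()) (.inl x)}
    {q : (ContractedGY G Y a' b').Walk (.inl x) (.inl y)}
    {h₂ : (ContractedGY G Y a' b').Adj (.inl y) (.inr ())}
    (hc : (Walk.cons h₁ (q.concat h₂)).IsCycle) (e : Sym2 (Y ⊕ Unit)) :
    (Walk.cons h₁ (q.concat h₂)).IsChord e ↔ q.IsChord e := by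
  have hinr := ((Walk.concat_isPath_iff h₂).mp ((Walk.cons_isCycle_iff _ _).mp hc).1).2
  have hxy : (x : V) ≠ y := fun h => hc.ne_of_cons_concat (congrArg _ (Subtype.ext h))
  have hxv := (adj_inr_inl x).mp h₁
  have hyv := (adj_inr_inl y).mp h₂.symm
  have hnbr : ∀ w, (ContractedGY G Y a' b').Adj (.inr ()) w → w = .inl x ∨ w = .inl y := by
    intro w hw
    obtain ⟨w, rfl, hwv⟩ := exists_eq_inl_of_adj_inr hw
    simp only [Sum.inl.injEq, ← Subtype.coe_inj]
    grind
  refine Walk.isChord_iff_of_support_subset (by intro z hz; simp [Walk.support_concat, hz])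
    (by intro e he; simp [Walk.edges_concat, he]) ?_ ?_ e
  · intro z w hzw hz hw
    simp only [Walk.edges_cons, Walk.edges_concat, List.concat_eq_append, List.mem_cons,
      List.mem_append, Sym2.eq_iff] at hzw
    grind
  · intro z w hz hw hzq hzw
    simp only [Walk.support_cons, Walk.support_concat, List.mem_cons, List.mem_append] at hz
    obtain rfl : z = .inr () := by grind
    rcases hnbr w hzw with rfl | rfl <;> simp [Walk.edges_concat, Sym2.eq_swap]

theorem not_existsUnique_isChord_cons_concat (huf : UnichordFree G)
    (hsplit : IsProper2CutsetSplit G X Y a b)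
    (ha' : G.neighborSet a ∩ Y = {a'}) (hb' : G.neighborSet b ∩ Y = {b'}) {x y : Y ⊕ Unit}
    (h₁ : (ContractedGY G Y a' b').Adj (.inr ()) x) (q : (ContractedGY G Y a' b').Walk x y)
    (h₂ : (ContractedGY G Y a' b').Adj y (.inr ())) (hc : (Walk.cons h₁ (q.concat h₂)).IsCycle) :
    ¬ ∃! e, (Walk.cons h₁ (q.concat h₂)).IsChord e := by
  obtain ⟨x, rfl, hxv⟩ := exists_eq_inl_of_adj_inr h₁
  obtain ⟨y, rfl, hyv⟩ := exists_eq_inl_of_adj_inr h₂.symm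
  obtain ⟨hq, hinr⟩ := (Walk.concat_isPath_iff h₂).mp ((Walk.cons_isCycle_iff _ _).mp hc).1
  have hxy : (x : V) ≠ y := fun h => hc.ne_of_cons_concat (congrArg _ (Subtype.ext h))
  simp only [isChord_cons_concat_iff hc]
  obtain ⟨q, rfl⟩ := exists_eq_map_inlEmbedding q hinr
  exact fun h => hsplit.not_existsUnique_isChord_of_mem_ends huf ha' hb' hxv hyv hxy _
    ((Walk.IsPath.of_map (f := inlEmbedding.toHom) hq).map Subtype.val_injective)
    (fun _ => q.mem_of_mem_support_map_induce) ((existsUnique_isChord_map_inlEmbedding_iff q).mp h)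

end ContractedGY

theorem stmt19_general {V : Type} (G : SimpleGraph V)
    (hsq : ¬ HasSquare G) (huf : UnichordFree G)
    (X Y : Set V) (a b : V) (hsplit : IsProper2CutsetSplit G X Y a b)
    (a' b' : V) (ha' : G.neighborSet a ∩ Y = {a'}) (hb' : G.neighborSet b ∩ Y = {b'})
    (hnoc : ¬ ∃ y ∈ Y, G.Adj y a' ∧ G.Adj y b') :
    ¬ HasSquare (ContractedGY G Y a' b') ∧ UnichordFree (ContractedGY G Y a' b') := by
  classical
  refine ⟨ContractedGY.not_hasSquare hsq hnoc, unichordFree_iff.mpr fun v c hc => ?_⟩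
  by_cases hinr : .inr () ∈ c.support
  · obtain ⟨x, y, h₁, q, h₂, hcq⟩ := (hc.rotate hinr).exists_eq_cons_concat
    have h := ContractedGY.not_existsUnique_isChord_cons_concat huf hsplit ha' hb' h₁ q h₂
      (hcq ▸ hc.rotate hinr)
    simpa only [← hcq, Walk.isChord_rotate_iff] using h
  · exact ContractedGY.not_existsUnique_isChord_of_inr_notMem huf c hc hinr

/-- If, in a {square,unichord}-free graph of maximum degree 3 with a proper
2-cutset split `(X, Y, a, b)`, the vertices `a` and `b` have unique neighbours
`a' ≠ b'` in `Y` and no vertex of `Y` is adjacent to both `a'` and `b'`, then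
the contracted graph `G_Y` is {square,unichord}-free. -/
theorem stmt19 {V : Type} [Fintype V] (G : SimpleGraph V)
    (hsq : ¬ HasSquare G) (huf : UnichordFree G)
    (hdeg : ∀ v, (G.neighborSet v).ncard ≤ 3)
    (X Y : Set V) (a b : V) (hsplit : IsProper2CutsetSplit G X Y a b)
    (a' b' : V) (ha' : G.neighborSet a ∩ Y = {a'}) (hb' : G.neighborSet b ∩ Y = {b'})
    (hab' : a' ≠ b') (hnoc : ¬ ∃ y ∈ Y, G.Adj y a' ∧ G.Adj y b') :
    ¬ HasSquare (ContractedGY G Y a' b') ∧ UnichordFree (ContractedGY G Y a' b') :=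
  stmt19_general G hsq huf X Y a b hsplit a' b' ha' hb' hnoc
end
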